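/- arXiv:2603.25605 — 2 statements merged into one kernel-verified Lean document; each statement's English description precedes it below -/
import Mathlib

section
/- Let U be an open subset of ℝ^m and K a compact topological space. Let f : U × K → ℝ be continuous, suppose that for all (x,y) ∈ U × K and all h ∈ ℝ^m the directional derivative ∇_h f(x,y) = lim_{t→0} t⁻¹(f(x+th,y) − f(x,y)) exists, and suppose that for each h the map (x,y) ↦ ∇_h f(x,y) is continuous on U × K. Then the function g(x) := sup_{y ∈ K} f(x,y) admits right directional derivatives in all directions at every x ∈ U, and ∇⁺_h g(x) = sup_{y ∈ argmax f(x,·)} ∇_h f(x,y). -/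
/-!
For a maximizer `y` of `f x`, the difference quotient of `g = ⨆ y, f · y` dominates that of
`f · y`, which gives the lower bound. For the upper bound, compare with a maximizer `yₜ` of
`f (x + t • h)` and apply the mean value theorem: the quotient is at most `D (x + c • h) yₜ` for
some `0 < c < t`. The maximizers depend upper hemicontinuously on the parameter (their graph is
closed and `K` is compact), so `yₜ` eventually lies in any neighbourhood of `argmax (f x)`, and
continuity of `D` with the tube lemma bounds `D (x + c • h) yₜ` by anything above its supremum
over `argmax (f x)`.
-/

open Filter Topology Set Function

def argmax {K α : Type*} [LE α] (φ : K → α) : Set K := {y | ∀ z, φ z ≤ φ y}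

section Argmax

variable {X K α : Type*}

theorem ciSup_eq_of_mem_argmax [ConditionallyCompleteLattice α] {φ : K → α} {y : K}
    (hy : y ∈ argmax φ) : ⨆ z, φ z = φ y :=
  have : Nonempty K := ⟨y⟩
  le_antisymm (ciSup_le hy) (le_ciSup ⟨φ y, forall_mem_range.2 hy⟩ y)

variable [TopologicalSpace X] [TopologicalSpace K]

theorem argmax_nonempty [CompactSpace K] [Nonempty K] [LinearOrder α] [TopologicalSpace α]
    [ClosedIciTopology α] {φ : K → α} (hφ : Continuous φ) : (argmax φ).Nonempty := by
  obtain ⟨y, -, hy⟩ := isCompact_univ.exists_isMaxOn univ_nonempty hφ.continuousOn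
  exact ⟨y, fun z => hy (mem_univ z)⟩

variable [LinearOrder α] [TopologicalSpace α] [OrderClosedTopology α]

theorem isClosed_argmax_graph {f : X → K → α} (hf : Continuous (uncurry f)) :
    IsClosed {p : X × K | p.2 ∈ argmax (f p.1)} := by
  change IsClosed {p : X × K | ∀ z, f p.1 z ≤ f p.1 p.2}
  rw [ofPred_forall]
  exact isClosed_iInter fun z =>
    isClosed_le (hf.comp (continuous_fst.prodMk continuous_const)) hf

theorem isClosed_argmax {φ : K → α} (hφ : Continuous φ) : IsClosed (argmax φ) := by
  simp only [argmax, ofPred_forall]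
  exact isClosed_iInter fun z => isClosed_le continuous_const hφ

theorem eventually_argmax_subset [CompactSpace K] {f : X → K → α} (hf : Continuous (uncurry f))
    {x₀ : X} {W : Set K} (hW : IsOpen W) (hW₀ : argmax (f x₀) ⊆ W) :
    ∀ᶠ x in 𝓝 x₀, argmax (f x) ⊆ W := by
  set S := Prod.fst '' ({p : X × K | p.2 ∈ argmax (f p.1)} ∩ Prod.snd ⁻¹' Wᶜ)
  have hC : IsClosed S := isClosedMap_fst_of_compactSpace _
    ((isClosed_argmax_graph hf).inter (hW.isClosed_compl.preimage continuous_snd))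
  have hx₀ : x₀ ∉ S := by
    rintro ⟨⟨_, y⟩, ⟨hy, hyW⟩, rfl⟩
    exact hyW (hW₀ hy)
  filter_upwards [hC.isOpen_compl.mem_nhds hx₀] with x hx y hy
  by_contra hyW
  exact hx ⟨(x, y), ⟨hy, hyW⟩, rfl⟩

end Argmax

section Danskin

variable {E K : Type*} [AddCommGroup E] [Module ℝ E] {f : E → K → ℝ} {x h : E}

theorem hasDerivAt_comp_add_smul {φ : E → ℝ} {s d : ℝ}
    (hφ : Tendsto (fun t : ℝ => t⁻¹ * (φ (x + s • h + t • h) - φ (x + s • h))) (𝓝[≠] 0) (𝓝 d)) :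
    HasDerivAt (fun u : ℝ => φ (x + u • h)) d s := by
  rw [hasDerivAt_iff_tendsto_slope_zero]
  refine hφ.congr fun t => ?_
  simp only [add_smul, add_assoc, smul_eq_mul]

theorem exists_slope_iSup_le_deriv {D : E → K → ℝ} {t : ℝ} (ht : 0 < t) {y : K}
    (hy : y ∈ argmax (f (x + t • h))) (hbdd : BddAbove (range (f x)))
    (hderiv : ∀ s ∈ Icc 0 t, HasDerivAt (fun u : ℝ => f (x + u • h) y) (D (x + s • h) y) s) :
    ∃ c ∈ Ioo 0 t, t⁻¹ * ((⨆ z, f (x + t • h) z) - ⨆ z, f x z) ≤ D (x + c • h) y := by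
  obtain ⟨c, hc, hslope⟩ := exists_hasDerivAt_eq_slope (fun u : ℝ => f (x + u • h) y)
    (fun s => D (x + s • h) y) ht (fun s hs => (hderiv s hs).continuousAt.continuousWithinAt)
    (fun s hs => hderiv s (Ioo_subset_Icc_self hs))
  simp only [zero_smul, add_zero, sub_zero] at hslope
  refine ⟨c, hc, ?_⟩
  rw [hslope, ciSup_eq_of_mem_argmax hy, div_eq_inv_mul]
  exact mul_le_mul_of_nonneg_left (by linarith [le_ciSup hbdd y]) (inv_nonneg.2 ht.le)

variable [TopologicalSpace K] [CompactSpace K]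

theorem eventually_lt_slope_iSup [Nonempty K] (hf : ∀ x', Continuous (f x')) {d : K → ℝ}
    (hd : ∀ y ∈ argmax (f x),
      Tendsto (fun t : ℝ => t⁻¹ * (f (x + t • h) y - f x y)) (𝓝[>] 0) (𝓝 (d y)))
    {b : ℝ} (hb : b < sSup (d '' argmax (f x))) :
    ∀ᶠ t in 𝓝[>] 0, b < t⁻¹ * ((⨆ y, f (x + t • h) y) - ⨆ y, f x y) := by
  obtain ⟨_, ⟨y, hy, rfl⟩, hby⟩ :=
    exists_lt_of_lt_csSup ((argmax_nonempty (hf x)).image d) hb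
  filter_upwards [(hd y hy).eventually (eventually_gt_nhds hby), self_mem_nhdsWithin]
    with t hbt (ht : 0 < t)
  refine hbt.trans_le (mul_le_mul_of_nonneg_left ?_ (inv_nonneg.2 ht.le))
  have hle := le_ciSup (isCompact_range (hf (x + t • h))).bddAbove y
  rw [ciSup_eq_of_mem_argmax hy]
  linarith

variable [TopologicalSpace E] [ContinuousAdd E] [ContinuousSMul ℝ E] {D : E → K → ℝ}

theorem eventually_slope_iSup_lt [Nonempty K] (hf : Continuous (uncurry f))
    (hDc : Continuous (uncurry D))
    (hD : ∀ᶠ x' in 𝓝 x, ∀ y,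
      Tendsto (fun t : ℝ => t⁻¹ * (f (x' + t • h) y - f x' y)) (𝓝[≠] 0) (𝓝 (D x' y)))
    {b : ℝ} (hb : sSup ((fun y => D x y) '' argmax (f x)) < b) :
    ∀ᶠ t in 𝓝[>] 0, t⁻¹ * ((⨆ y, f (x + t • h) y) - ⨆ y, f x y) < b := by
  have hA : IsCompact (argmax (f x)) := (isClosed_argmax (hf.uncurry_left x)).isCompact
  obtain ⟨V, W, hV, hW, hxV, hAW, hVW⟩ := generalized_tube_lemma isCompact_singleton hA
    (isOpen_lt hDc continuous_const : IsOpen {p : E × K | D p.1 p.2 < b}) (by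
      rintro ⟨x', y⟩ ⟨hx' : x' = x, hy : y ∈ argmax (f x)⟩
      subst hx'
      exact (le_csSup (hA.image (hDc.uncurry_left _)).bddAbove ⟨y, hy, rfl⟩).trans_lt hb)
  have hline : Tendsto (fun s : ℝ => x + s • h) (𝓝 0) (𝓝 x) :=
    (continuous_const.add (continuous_id.smul continuous_const)).tendsto' _ _ (by simp)
  have hnear : ∀ᶠ s in 𝓝 (0 : ℝ), x + s • h ∈ V ∧ argmax (f (x + s • h)) ⊆ W ∧
      ∀ y, HasDerivAt (fun u : ℝ => f (x + u • h) y) (D (x + s • h) y) s := by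
    filter_upwards [hline.eventually (hV.mem_nhds (hxV rfl)),
      hline.eventually (eventually_argmax_subset hf hW hAW), hline.eventually hD]
      with s hsV hsW hsD
    exact ⟨hsV, hsW, fun y => hasDerivAt_comp_add_smul (φ := (f · y)) (hsD y)⟩
  obtain ⟨l, u, ⟨hl, hu⟩, hlu⟩ := mem_nhds_iff_exists_Ioo_subset.1 hnear
  filter_upwards [Ioo_mem_nhdsGT hu] with t ht
  have hIcc : Icc 0 t ⊆ Ioo l u := Icc_subset_Ioo hl ht.2
  obtain ⟨y, hy⟩ := argmax_nonempty (hf.uncurry_left (x + t • h))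
  obtain ⟨c, hc, hle⟩ := exists_slope_iSup_le_deriv ht.1 hy
    (isCompact_range (hf.uncurry_left x)).bddAbove fun s hs => (hlu (hIcc hs)).2.2 y
  exact hle.trans_lt (@hVW (x + c • h, y) ⟨(hlu (hIcc (Ioo_subset_Icc_self hc))).1,
    (hlu (hIcc (right_mem_Icc.2 ht.1.le))).2.1 hy⟩)

theorem tendsto_slope_iSup [Nonempty K] (hf : Continuous (uncurry f))
    (hDc : Continuous (uncurry D))
    (hD : ∀ᶠ x' in 𝓝 x, ∀ y,
      Tendsto (fun t : ℝ => t⁻¹ * (f (x' + t • h) y - f x' y)) (𝓝[≠] 0) (𝓝 (D x' y))) :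
    Tendsto (fun t : ℝ => t⁻¹ * ((⨆ y, f (x + t • h) y) - ⨆ y, f x y)) (𝓝[>] 0)
      (𝓝 (sSup ((fun y => D x y) '' argmax (f x)))) :=
  tendsto_order.2
    ⟨fun _ hb => eventually_lt_slope_iSup hf.uncurry_left
      (fun y _ => (hD.self_of_nhds y).mono_left (nhdsGT_le_nhdsNE 0)) hb,
    fun _ hb => eventually_slope_iSup_lt hf hDc hD hb⟩

end Danskin

/-- Danskin's theorem: directional differentiability of `g x = sup_{y ∈ K} f x y`. -/
theorem danskin {m : ℕ} {U : Set (Fin m → ℝ)} (hU : IsOpen U)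
    {K : Type*} [TopologicalSpace K] [CompactSpace K] [Nonempty K]
    (f : (Fin m → ℝ) → K → ℝ)
    (hf : Continuous fun p : (Fin m → ℝ) × K => f p.1 p.2)
    (D : (Fin m → ℝ) → K → (Fin m → ℝ) → ℝ)
    (hD : ∀ x ∈ U, ∀ (y : K) (h : Fin m → ℝ),
      Tendsto (fun t : ℝ => t⁻¹ * (f (x + t • h) y - f x y)) (𝓝[≠] 0) (𝓝 (D x y h)))
    (hDcont : ∀ h : Fin m → ℝ, Continuous fun p : (Fin m → ℝ) × K => D p.1 p.2 h) :
    ∀ x ∈ U, ∀ h : Fin m → ℝ,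
      Tendsto (fun t : ℝ => t⁻¹ * ((⨆ y : K, f (x + t • h) y) - ⨆ y : K, f x y))
        (𝓝[>] (0 : ℝ))
        (𝓝 (sSup ((fun y => D x y h) '' {y : K | ∀ z : K, f x z ≤ f x y}))) := fun x hx h =>
  tendsto_slope_iSup (x := x) (D := fun x' y => D x' y h) hf (hDcont h)
    (eventually_of_mem (hU.mem_nhds hx) fun x' hx' y => hD x' hx' y h)
end

section
/- Let Δ = {t ∈ ℝ^{n+1} : t_i ≥ 0 for all i, Σ_i t_i = 1} be the standard n-simplex. Let f : Δ → Δ be a continuous map such that for every index i and every t ∈ Δ with t_i = 0, also f(t)_i = 0 (i.e. f maps each closed face of Δ into itself). Then f is surjective. -/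
/-!
Fix `y ∈ Δ` and let `F i = {t ∈ Δ | y i ≤ f t i}`. These sets are closed, and every `t ∈ Δ`
lies in some `F i` with `0 < t i`: otherwise `f t < y` on the support of `t`, while
`f t = 0 ≤ y` off it, contradicting `∑ i, f t i = 1 = ∑ i, y i`. By the
Knaster–Kuratowski–Mazurkiewicz lemma the `F i` have a common point `t`; then `y ≤ f t`, and
equal sums force `f t = y`.

The KKM lemma follows from Sperner's lemma for Kuhn's triangulation of
`{x ∈ ℕⁿ⁺¹ | ∑ i, x i = N}` by letting `N → ∞`, using compactness of `Δ`. Sperner's lemma is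
the parity argument: call a facet of a cell a door if it carries exactly the colours
`0, …, n - 1`. A cell has an odd number of doors iff it is rainbow; the doors off the face
`x n = 0` are paired by the cells on their two sides; and the doors in that face are the
rainbow cells one dimension lower.
-/

open Finset

section Parity

variable {α β : Type*} [DecidableEq α] [DecidableEq β]

lemma Finset.image_erase_eq_image {s : Finset α} {g : α → β} {k k' : α} (hk' : k' ∈ s)
    (hne : k' ≠ k) (h : g k' = g k) : (s.erase k).image g = s.image g := by
  by_cases hk : k ∈ s
  · conv_rhs => rw [← insert_erase hk]
    rw [image_insert, insert_eq_of_mem (mem_image.2 ⟨k', mem_erase.2 ⟨hne, hk'⟩, h⟩)]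
  · rw [erase_eq_of_notMem hk]

variable [Fintype α]

lemma injOn_of_image_erase_eq_erase {g : α → α} {a k : α}
    (h : (univ.erase k).image g = univ.erase a) : Set.InjOn g (univ.erase k) :=
  injOn_of_card_image_eq (by rw [h, card_erase_of_mem (mem_univ _), card_erase_of_mem (mem_univ _)])

lemma card_filter_image_erase_eq_erase_of_surjective {g : α → α} (hg : Function.Surjective g)
    (a : α) : (univ.filter fun k => (univ.erase k).image g = univ.erase a).card = 1 := by
  have hinj := Finite.injective_iff_surjective.2 hg
  obtain ⟨k₀, rfl⟩ := hg a
  rw [card_eq_one]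
  refine ⟨k₀, ext fun k => ?_⟩
  rw [mem_filter, image_erase hinj, image_univ_of_surjective hg, erase_inj _ (mem_univ _),
    hinj.eq_iff, mem_singleton, and_iff_right (mem_univ _)]

/-- If `g` maps the complement of `k` onto that of `a`, then `g k` is also taken at some `k' ≠ k`,
and `k`, `k'` are the only such indices. -/
lemma even_card_filter_image_erase_eq_erase {g : α → α} (hg : ¬ Function.Surjective g)
    (a : α) : Even (univ.filter fun k => (univ.erase k).image g = univ.erase a).card := by
  rcases (univ.filter fun k => (univ.erase k).image g = univ.erase a).eq_empty_or_nonempty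
    with hD | ⟨k, hk⟩
  · rw [hD, card_empty]
    exact Even.zero
  rw [mem_filter] at hk
  have hgk : g k ≠ a := by
    rintro rfl
    refine hg fun y => ?_
    obtain ⟨x, -, hx⟩ := mem_image.1 (show y ∈ (insert k (univ.erase k)).image g by
      rw [image_insert, hk.2, insert_erase (mem_univ _)]
      exact mem_univ y)
    exact ⟨x, hx⟩
  obtain ⟨k', hk'k, hk'⟩ := mem_image.1 (hk.2 ▸ mem_erase.2 ⟨hgk, mem_univ _⟩ :
    g k ∈ (univ.erase k).image g)
  have hne : k' ≠ k := ne_of_mem_erase hk'k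
  have hD : univ.filter (fun k => (univ.erase k).image g = univ.erase a) = {k, k'} := by
    ext j
    simp only [mem_filter, mem_univ, true_and, mem_insert, mem_singleton]
    constructor
    · intro hj
      by_contra! hjk
      exact hne (injOn_of_image_erase_eq_erase hj (by simp [hjk.2.symm]) (by simp [hjk.1.symm]) hk')
    · rintro (h | h) <;> rw [h]
      · exact hk.2
      · rw [image_erase_eq_image (mem_univ k) hne.symm hk'.symm,
          ← image_erase_eq_image (mem_univ k') hne hk', hk.2]
  rw [hD, card_pair hne.symm]
  exact even_two

lemma card_filter_image_erase_eq_erase (g : α → α) (a : α) :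
    ((univ.filter fun k => (univ.erase k).image g = univ.erase a).card : ZMod 2) =
      if Function.Surjective g then 1 else 0 := by
  split_ifs with hg
  · rw [card_filter_image_erase_eq_erase_of_surjective hg, Nat.cast_one]
  · exact ZMod.natCast_eq_zero_iff_even.2 (even_card_filter_image_erase_eq_erase hg a)

end Parity

namespace Sperner

variable {n : ℕ}

/-! Kuhn's triangulation of `{x : Fin (n + 1) → ℤ | 0 ≤ x, ∑ i, x i = N}`: a cell is given by a
base point `b` and a permutation `σ` of the moves `step m`; its vertices are `vertex b σ k`,
`k ≤ n`, namely `b`, `b + step (σ 0)`, `b + step (σ 0) + step (σ 1)`, … -/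

def step (m : Fin n) (i : Fin (n + 1)) : ℤ :=
  (if i = m.castSucc then 1 else 0) - (if i = m.succ then 1 else 0)

lemma sum_step (m : Fin n) : ∑ i, step m i = 0 := by
  simp [step, sum_sub_distrib]

lemma step_castSucc (m : Fin n) : step m m.castSucc = 1 := by
  simp [step, Fin.castSucc_lt_succ.ne]

lemma step_succ (m : Fin n) : step m m.succ = -1 := by
  simp [step, Fin.castSucc_lt_succ.ne']

lemma step_eq_zero {m : Fin n} {i : Fin (n + 1)} (h₁ : i ≠ m.castSucc) (h₂ : i ≠ m.succ) :
    step m i = 0 := by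
  simp [step, h₁, h₂]

lemma neg_one_le_step (m : Fin n) (i : Fin (n + 1)) : -1 ≤ step m i := by
  unfold step; split_ifs <;> norm_num

lemma step_le_one (m : Fin n) (i : Fin (n + 1)) : step m i ≤ 1 := by
  unfold step; split_ifs <;> norm_num

lemma step_eq_one_iff {m : Fin n} {i : Fin (n + 1)} : step m i = 1 ↔ i = m.castSucc := by
  refine ⟨fun h => ?_, fun h => h ▸ step_castSucc m⟩
  by_contra hi
  by_cases hi' : i = m.succ <;> simp_all [step]

lemma step_eq_neg_one_iff {m : Fin n} {i : Fin (n + 1)} : step m i = -1 ↔ i = m.succ := by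
  refine ⟨fun h => ?_, fun h => h ▸ step_succ m⟩
  by_contra hi
  by_cases hi' : i = m.castSucc <;> simp_all [step, Fin.castSucc_lt_succ.ne]

lemma sum_step_apply (i : Fin (n + 1)) :
    ∑ m : Fin n, step m i = (if i = 0 then 1 else 0) - (if i = Fin.last n then 1 else 0) := by
  have h₁ := Fin.sum_univ_castSucc fun j : Fin (n + 1) => if i = j then (1 : ℤ) else 0
  have h₂ := Fin.sum_univ_succ fun j : Fin (n + 1) => if i = j then (1 : ℤ) else 0
  simp only [sum_ite_eq, mem_univ, if_true] at h₁ h₂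
  simp only [step, sum_sub_distrib]
  linarith

lemma step_apply_zero_nonneg (m : Fin n) : 0 ≤ step m 0 := by
  rw [step, if_neg (Fin.succ_ne_zero m).symm]
  split_ifs <;> norm_num

lemma step_apply_last_nonpos (m : Fin n) : step m (Fin.last n) ≤ 0 := by
  rw [step, if_neg (Fin.castSucc_lt_last m).ne']
  split_ifs <;> norm_num

def vertex (b : Fin (n + 1) → ℤ) (σ : Equiv.Perm (Fin n)) (k : ℕ) (i : Fin (n + 1)) : ℤ :=
  b i + ∑ j ∈ univ.filter (fun j : Fin n => (j : ℕ) < k), step (σ j) i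

section Vertex

variable (b : Fin (n + 1) → ℤ) (σ : Equiv.Perm (Fin n))

lemma vertex_zero : vertex b σ 0 = b := by
  ext i; simp [vertex]

lemma vertex_succ {k : ℕ} (hk : k < n) (i : Fin (n + 1)) :
    vertex b σ (k + 1) i = vertex b σ k i + step (σ ⟨k, hk⟩) i := by
  have : univ.filter (fun j : Fin n => (j : ℕ) < k + 1) =
      insert ⟨k, hk⟩ (univ.filter fun j : Fin n => (j : ℕ) < k) := by
    ext j
    simp only [mem_filter, mem_univ, true_and, mem_insert, Fin.ext_iff]
    omega
  rw [vertex, this, sum_insert (by simp), vertex]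
  ring

lemma vertex_of_le {k : ℕ} (hk : n ≤ k) (i : Fin (n + 1)) :
    vertex b σ k i = b i + (if i = 0 then 1 else 0) - (if i = Fin.last n then 1 else 0) := by
  rw [vertex, filter_true_of_mem fun j _ => j.is_lt.trans_le hk,
    Equiv.sum_comp σ fun m => step m i, sum_step_apply]
  ring

lemma sum_vertex (k : ℕ) : ∑ i, vertex b σ k i = ∑ i, b i := by
  simp only [vertex, sum_add_distrib, add_eq_left]
  rw [sum_comm]
  simp [sum_step]

lemma vertex_eq_of_step_eq_zero {k₁ k₂ : ℕ} (hk : k₁ ≤ k₂) (i : Fin (n + 1))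
    (h : ∀ j : Fin n, k₁ ≤ j → j < k₂ → step (σ j) i = 0) :
    vertex b σ k₂ i = vertex b σ k₁ i := by
  rw [vertex, vertex, add_right_inj]
  refine (sum_subset (fun j => ?_) fun j hj hj' => ?_).symm
  · simp only [mem_filter, mem_univ, true_and]; omega
  · simp only [mem_filter, mem_univ, true_and, not_lt] at hj hj'
    exact h j hj' hj

lemma monotone_vertex_of_step_nonneg {i : Fin (n + 1)} (h : ∀ m, 0 ≤ step m i) :
    Monotone fun k => vertex b σ k i := by
  refine monotone_nat_of_le_succ fun k => ?_
  rcases lt_or_ge k n with hk | hk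
  · simpa [vertex_succ b σ hk] using h _
  · rw [vertex_of_le b σ hk, vertex_of_le b σ (by omega)]

lemma antitone_vertex_of_step_nonpos {i : Fin (n + 1)} (h : ∀ m, step m i ≤ 0) :
    Antitone fun k => vertex b σ k i := by
  refine antitone_nat_of_succ_le fun k => ?_
  rcases lt_or_ge k n with hk | hk
  · simpa [vertex_succ b σ hk] using h _
  · rw [vertex_of_le b σ hk, vertex_of_le b σ (by omega)]

lemma abs_vertex_sub_le (k : ℕ) (i : Fin (n + 1)) : |vertex b σ k i - b i| ≤ 1 := by
  have hcard : ∀ g : Fin n → Fin (n + 1), Function.Injective g →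
      (univ.filter fun j : Fin n => (j : ℕ) < k ∧ i = g j).card ≤ 1 := fun g hg =>
    card_le_one.2 fun j₁ h₁ j₂ h₂ => hg ((mem_filter.1 h₁).2.2.symm.trans (mem_filter.1 h₂).2.2)
  have h₁ := hcard _ ((Fin.castSucc_injective n).comp σ.injective)
  have h₂ := hcard _ ((Fin.succ_injective n).comp σ.injective)
  simp only [vertex, step, add_sub_cancel_left, sum_sub_distrib, sum_boole, filter_filter,
    Function.comp_apply] at h₁ h₂ ⊢
  rw [abs_le]
  constructor <;> omega

end Vertex

section Cells

variable {b : Fin (n + 1) → ℤ} {σ : Equiv.Perm (Fin n)} {N : ℕ}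

def IsCell (N : ℕ) (b : Fin (n + 1) → ℤ) (σ : Equiv.Perm (Fin n)) : Prop :=
  ∑ i, b i = N ∧ ∀ k i, 0 ≤ vertex b σ k i

lemma IsCell.vertex_nonneg (h : IsCell N b σ) (k : ℕ) (i : Fin (n + 1)) : 0 ≤ vertex b σ k i :=
  h.2 k i

lemma IsCell.sum_vertex (h : IsCell N b σ) (k : ℕ) : ∑ i, vertex b σ k i = N :=
  (Sperner.sum_vertex b σ k).trans h.1

lemma IsCell.base_nonneg (h : IsCell N b σ) (i : Fin (n + 1)) : 0 ≤ b i := by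
  simpa [vertex_zero] using h.vertex_nonneg 0 i

lemma isCell_of_vertex_nonneg (hsum : ∑ i, b i = N)
    (h : ∀ k ≤ n, ∀ i, 0 ≤ vertex b σ k i) : IsCell N b σ := by
  refine ⟨hsum, fun k i => ?_⟩
  rcases le_or_gt k n with hk | hk
  · exact h k hk i
  · rw [vertex_of_le b σ hk.le, ← vertex_of_le b σ le_rfl]
    exact h n le_rfl i

lemma IsCell.base_le (h : IsCell N b σ) (i : Fin (n + 1)) : b i ≤ N :=
  h.1 ▸ single_le_sum (fun j _ => h.base_nonneg j) (mem_univ i)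

abbrev Cell (n : ℕ) := (Fin (n + 1) → ℤ) × Equiv.Perm (Fin n)

open Classical in
noncomputable def cells (n N : ℕ) : Finset (Cell n) :=
  (Icc 0 (fun _ => (N : ℤ)) ×ˢ univ).filter fun p => IsCell N p.1 p.2

lemma mem_cells {p : Cell n} : p ∈ cells n N ↔ IsCell N p.1 p.2 := by
  classical
  rw [cells, mem_filter, and_iff_right_iff_imp]
  exact fun h => mem_product.2 ⟨mem_Icc.2 ⟨h.base_nonneg, h.base_le⟩, mem_univ _⟩

variable (b σ) in
def facet (k : Fin (n + 1)) : Finset (Fin (n + 1) → ℤ) :=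
  univ.image fun j : Fin n => vertex b σ (k.succAbove j)

lemma vertex_mem_facet {m k : Fin (n + 1)} (h : m ≠ k) : vertex b σ m ∈ facet b σ k := by
  obtain ⟨j, rfl⟩ := Fin.exists_succAbove_eq h
  exact mem_image_of_mem _ (mem_univ j)

def IsSpernerColoring (N : ℕ) (c : (Fin (n + 1) → ℤ) → Fin (n + 1)) : Prop :=
  ∀ x : Fin (n + 1) → ℤ, (∀ i, 0 ≤ x i) → ∑ i, x i = N → 0 < x (c x)

variable {c : (Fin (n + 1) → ℤ) → Fin (n + 1)}

def IsRainbow (c : (Fin (n + 1) → ℤ) → Fin (n + 1)) (b : Fin (n + 1) → ℤ)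
    (σ : Equiv.Perm (Fin n)) : Prop :=
  Function.Surjective fun k : Fin (n + 1) => c (vertex b σ k)

def IsDoor (c : (Fin (n + 1) → ℤ) → Fin (n + 1)) (b : Fin (n + 1) → ℤ) (σ : Equiv.Perm (Fin n))
    (k : Fin (n + 1)) : Prop :=
  (facet b σ k).image c = univ.erase (Fin.last n)

def OnBottom (b : Fin (n + 1) → ℤ) (σ : Equiv.Perm (Fin n)) (k : Fin (n + 1)) : Prop :=
  ∀ x ∈ facet b σ k, x (Fin.last n) = 0

lemma card_filter_isDoor [DecidablePred (IsDoor c b σ)] [Decidable (IsRainbow c b σ)] :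
    ((univ.filter (IsDoor c b σ)).card : ZMod 2) = if IsRainbow c b σ then 1 else 0 := by
  convert card_filter_image_erase_eq_erase (fun k : Fin (n + 1) => c (vertex b σ k)) (Fin.last n)
    using 4 with k
  rw [IsDoor, facet, image_image, ← compl_singleton k, ← Fin.image_succAbove_univ k, image_image]
  · rfl
  · rfl

lemma forall_mem_facet {k : Fin (n + 1)} {P : (Fin (n + 1) → ℤ) → Prop}
    (h : ∀ m : Fin (n + 1), m ≠ k → P (vertex b σ m)) : ∀ x ∈ facet b σ k, P x := by
  intro x hx
  obtain ⟨j, -, rfl⟩ := mem_image.1 hx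
  exact h _ (Fin.succAbove_ne k j)

lemma IsDoor.onBottom (hc : IsSpernerColoring N c) (hcell : IsCell N b σ) {k : Fin (n + 1)}
    (hdoor : IsDoor c b σ k) {i : Fin (n + 1)}
    (hi : ∀ m : Fin (n + 1), m ≠ k → vertex b σ m i = 0) :
    OnBottom b σ k := by
  obtain rfl : i = Fin.last n := by
    -- otherwise the colour `i` would be missing from the door
    by_contra hne
    obtain ⟨x, hx, rfl⟩ := mem_image.1 (hdoor ▸ mem_erase.2 ⟨hne, mem_univ i⟩)
    obtain ⟨j, -, rfl⟩ := mem_image.1 hx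
    exact (hc _ (hcell.vertex_nonneg _) (hcell.sum_vertex _)).ne' (hi _ (Fin.succAbove_ne k j))
  exact forall_mem_facet hi

end Cells

section Swap

variable {b : Fin (n + 1) → ℤ} {σ : Equiv.Perm (Fin n)} {N : ℕ}
  {c : (Fin (n + 1) → ℤ) → Fin (n + 1)} {p q : Fin n}

lemma vertex_swap_of_ne (hpq : (q : ℕ) = p + 1) {k : ℕ} (hk : k ≠ q) :
    vertex b ((Equiv.swap p q).trans σ) k = vertex b σ k := by
  ext i
  refine congrArg _ (sum_equiv (Equiv.swap p q) (fun j => ?_) fun j _ => ?_)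
  · rcases eq_or_ne j p with rfl | hjp
    · simp only [mem_filter, mem_univ, true_and, Equiv.swap_apply_left]
      omega
    rcases eq_or_ne j q with rfl | hjq
    · simp only [mem_filter, mem_univ, true_and, Equiv.swap_apply_right]
      omega
    · rw [Equiv.swap_apply_of_ne_of_ne hjp hjq]
  · simp

lemma vertex_swap (hpq : (q : ℕ) = p + 1) (i : Fin (n + 1)) :
    vertex b ((Equiv.swap p q).trans σ) q i = vertex b σ p i + step (σ q) i := by
  rw [hpq, vertex_succ _ _ p.is_lt, Fin.eta, vertex_swap_of_ne hpq (by omega)]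
  simp

lemma facet_swap (hpq : (q : ℕ) = p + 1) :
    facet b ((Equiv.swap p q).trans σ) q.castSucc = facet b σ q.castSucc := by
  refine image_congr fun j _ => vertex_swap_of_ne hpq fun h => ?_
  exact Fin.succAbove_ne _ j (Fin.ext (h.trans (Fin.val_castSucc q).symm))

lemma swap_trans_ne (hpq : (q : ℕ) = p + 1) : (Equiv.swap p q).trans σ ≠ σ := by
  intro h
  have := congrArg (fun τ : Equiv.Perm (Fin n) => τ p) h
  simp only [Equiv.trans_apply, Equiv.swap_apply_left, σ.injective.eq_iff] at this
  omega

lemma IsCell.swap (hpq : (q : ℕ) = p + 1) (hc : IsSpernerColoring N c) (hcell : IsCell N b σ)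
    (hdoor : IsDoor c b σ q.castSucc) (hbot : ¬ OnBottom b σ q.castSucc) :
    IsCell N b ((Equiv.swap p q).trans σ) := by
  refine ⟨hcell.1, fun k i => ?_⟩
  rcases eq_or_ne k q with rfl | hk
  swap
  · rw [vertex_swap_of_ne hpq hk]
    exact hcell.vertex_nonneg k i
  rw [vertex_swap hpq]
  by_contra! hneg
  have h₀ := hcell.vertex_nonneg p i
  have h₂ := hcell.vertex_nonneg (q + 1) i
  have hq₁ : vertex b σ (q + 1) i = vertex b σ p i + step (σ p) i + step (σ q) i := by
    rw [vertex_succ _ _ q.is_lt, Fin.eta, hpq, vertex_succ _ _ p.is_lt, Fin.eta]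
  have := neg_one_le_step (σ q) i
  have := step_le_one (σ p) i
  have hp : i = (σ p).castSucc := step_eq_one_iff.1 (by omega)
  have hq : i = (σ q).succ := step_eq_neg_one_iff.1 (by omega)
  -- coordinate `i` goes up at move `p`, down at move `q`, so it vanishes on the whole facet
  have hflat : ∀ j, j ≠ p → j ≠ q → step (σ j) i = 0 := fun j hjp hjq => step_eq_zero
    (fun h => hjp (σ.injective (Fin.castSucc_injective _ (h.symm.trans hp))))
    (fun h => hjq (σ.injective (Fin.succ_injective _ (h.symm.trans hq))))
  refine hbot (hdoor.onBottom hc hcell (i := i) fun m hm => ?_)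
  have hm' : (m : ℕ) ≠ q := fun h => hm (Fin.ext h)
  rcases lt_or_gt_of_ne hm' with hlt | hgt
  · rw [← vertex_eq_of_step_eq_zero b σ (k₂ := p) (by omega) i fun j _ hj =>
      hflat j (by rintro rfl; omega) (by rintro rfl; omega)]
    omega
  · rw [vertex_eq_of_step_eq_zero b σ (k₁ := q + 1) hgt i fun j hj _ =>
      hflat j (by rintro rfl; omega) (by rintro rfl; omega)]
    omega

end Swap

section Rotate

variable {b : Fin (n + 2) → ℤ} {σ : Equiv.Perm (Fin (n + 1))} {N : ℕ}
  {c : (Fin (n + 2) → ℤ) → Fin (n + 2)}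

lemma vertex_one (b : Fin (n + 2) → ℤ) (σ : Equiv.Perm (Fin (n + 1))) :
    vertex b σ 1 = b + step (σ 0) := by
  ext i
  rw [vertex_succ b σ n.succ_pos, vertex_zero, Fin.mk_zero, Pi.add_apply]

lemma vertex_rotate {m : ℕ} (hm : m ≤ n) :
    vertex (vertex b σ 1) ((finRotate (n + 1)).trans σ) m = vertex b σ (m + 1) := by
  induction m with
  | zero => rw [vertex_zero]
  | succ m ih =>
    ext i
    rw [vertex_succ _ _ (by omega), ih (by omega), Equiv.trans_apply, finRotate_of_lt (by omega),
      vertex_succ b σ (k := m + 1) (by omega)]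

lemma vertex_unrotate {m : ℕ} (hm : m ≤ n) :
    vertex (b - step (σ (Fin.last n))) ((finRotate (n + 1)).symm.trans σ) (m + 1) =
      vertex b σ m := by
  induction m with
  | zero =>
    rw [vertex_one, vertex_zero, Equiv.trans_apply, (Equiv.symm_apply_eq _).2 (finRotate_last).symm,
      sub_add_cancel]
  | succ m ih =>
    ext i
    rw [vertex_succ _ _ (by omega), ih (by omega), Equiv.trans_apply,
      (Equiv.symm_apply_eq _).2 (finRotate_of_lt (by omega)).symm, vertex_succ b σ (by omega)]

lemma facet_rotate :
    facet (vertex b σ 1) ((finRotate (n + 1)).trans σ) (Fin.last (n + 1)) = facet b σ 0 := by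
  refine image_congr fun j _ => ?_
  rw [Fin.succAbove_last, Fin.succAbove_zero, Fin.val_castSucc, Fin.val_succ,
    vertex_rotate (by omega)]

lemma facet_unrotate :
    facet (b - step (σ (Fin.last n))) ((finRotate (n + 1)).symm.trans σ) 0 =
      facet b σ (Fin.last (n + 1)) := by
  refine image_congr fun j _ => ?_
  rw [Fin.succAbove_last, Fin.succAbove_zero, Fin.val_castSucc, Fin.val_succ,
    vertex_unrotate (by omega)]

lemma IsCell.rotate (hcell : IsCell N b σ) (hbot : ¬ OnBottom b σ 0) :
    IsCell N (vertex b σ 1) ((finRotate (n + 1)).trans σ) := by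
  refine isCell_of_vertex_nonneg (hcell.sum_vertex 1) fun m hm i => ?_
  rcases hm.lt_or_eq with hm | rfl
  · rw [vertex_rotate (by omega)]
    exact hcell.vertex_nonneg _ i
  rw [vertex_of_le (vertex b σ 1) _ le_rfl, vertex_one]
  have h₁ := hcell.vertex_nonneg 1 i
  rw [vertex_one] at h₁
  by_contra! hneg
  simp only [Pi.add_apply] at hneg h₁
  obtain rfl : i = Fin.last (n + 1) := by
    by_contra h
    rw [if_neg h] at hneg
    split_ifs at hneg <;> omega
  -- the last coordinate never increases along the cell, and it already vanishes at vertex 1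
  refine hbot (forall_mem_facet fun m hm => le_antisymm ?_ (hcell.vertex_nonneg m _))
  have hanti := antitone_vertex_of_step_nonpos b σ step_apply_last_nonpos
    (Nat.one_le_iff_ne_zero.2 (Fin.val_ne_of_ne hm))
  simp only [vertex_one, Pi.add_apply] at hanti
  rw [if_neg Fin.last_pos.ne', if_pos rfl] at hneg
  omega

lemma IsCell.unrotate (hc : IsSpernerColoring N c) (hcell : IsCell N b σ)
    (hdoor : IsDoor c b σ (Fin.last (n + 1))) (hbot : ¬ OnBottom b σ (Fin.last (n + 1))) :
    IsCell N (b - step (σ (Fin.last n))) ((finRotate (n + 1)).symm.trans σ) := by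
  refine isCell_of_vertex_nonneg (by simp [sum_sub_distrib, sum_step, hcell.1]) fun m hm i => ?_
  obtain _ | m := m
  swap
  · rw [vertex_unrotate (by omega)]
    exact hcell.vertex_nonneg _ i
  rw [vertex_zero]
  by_contra! hneg
  simp only [Pi.sub_apply] at hneg
  have h₀ := hcell.base_nonneg i
  have hstep : step (σ (Fin.last n)) i = 1 := by
    have := step_le_one (σ (Fin.last n)) i
    omega
  have hi : i ≠ Fin.last (n + 1) := by
    rw [step_eq_one_iff.1 hstep]
    exact (Fin.castSucc_lt_last _).ne
  have hlast : vertex b σ n i + step (σ (Fin.last n)) i =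
      b i + (if i = 0 then 1 else 0) - (if i = Fin.last (n + 1) then 1 else 0) :=
    (vertex_succ b σ n.lt_succ_self i).symm.trans (vertex_of_le b σ le_rfl i)
  rw [hstep, if_neg hi] at hlast
  have hn := hcell.vertex_nonneg n i
  obtain rfl : i = 0 := by
    by_contra h
    rw [if_neg h] at hlast
    omega
  -- the first coordinate never decreases along the cell, and it vanishes at vertices 0 and n
  refine hbot (hdoor.onBottom hc hcell fun m hm => le_antisymm ?_ (hcell.vertex_nonneg m 0))
  have := monotone_vertex_of_step_nonneg b σ step_apply_zero_nonneg
    (Nat.le_of_lt_succ (Fin.val_lt_last hm))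
  simp only [if_true] at hlast this
  omega

end Rotate

section Neighbour

variable {N : ℕ} {c : (Fin (n + 2) → ℤ) → Fin (n + 2)}

/-- The other cell containing the facet opposite to the `k`-th vertex of a cell, together with
the index of its vertex opposite to that facet. -/
noncomputable def neighbour : Cell (n + 1) × Fin (n + 2) → Cell (n + 1) × Fin (n + 2)
  | ((b, σ), k) =>
    if h₀ : k = 0 then ((vertex b σ 1, (finRotate (n + 1)).trans σ), Fin.last (n + 1))
    else if hl : k = Fin.last (n + 1) then
      ((b - step (σ (Fin.last n)), (finRotate (n + 1)).symm.trans σ), 0)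
    else ((b, (Equiv.swap (k.pred h₀) (k.castPred hl)).trans σ), k)

variable (b : Fin (n + 2) → ℤ) (σ : Equiv.Perm (Fin (n + 1)))

lemma neighbour_zero :
    neighbour ((b, σ), 0) = ((vertex b σ 1, (finRotate (n + 1)).trans σ), Fin.last (n + 1)) := by
  simp [neighbour]

lemma neighbour_last : neighbour ((b, σ), Fin.last (n + 1)) =
    ((b - step (σ (Fin.last n)), (finRotate (n + 1)).symm.trans σ), 0) := by
  simp [neighbour, Fin.last_pos.ne']

lemma neighbour_of_ne {k : Fin (n + 2)} (h₀ : k ≠ 0) (hl : k ≠ Fin.last (n + 1)) :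
    neighbour ((b, σ), k) = ((b, (Equiv.swap (k.pred h₀) (k.castPred hl)).trans σ), k) := by
  simp [neighbour, h₀, hl]

lemma val_castPred_eq_val_pred_add_one {k : Fin (n + 2)} (h₀ : k ≠ 0)
    (hl : k ≠ Fin.last (n + 1)) : (k.castPred hl : ℕ) = k.pred h₀ + 1 := by
  rw [Fin.coe_castPred, Fin.val_pred]
  have := Fin.pos_iff_ne_zero.2 h₀
  omega

lemma neighbour_neighbour (x : Cell (n + 1) × Fin (n + 2)) : neighbour (neighbour x) = x := by
  obtain ⟨⟨b, σ⟩, k⟩ := x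
  by_cases h₀ : k = 0
  · subst h₀
    rw [neighbour_zero, neighbour_last, Equiv.trans_apply, finRotate_last, vertex_one,
      add_sub_cancel_right, ← Equiv.trans_assoc, Equiv.symm_trans_self, Equiv.refl_trans]
  by_cases hl : k = Fin.last (n + 1)
  · subst hl
    rw [neighbour_last, neighbour_zero, vertex_unrotate n.zero_le, vertex_zero,
      ← Equiv.trans_assoc, Equiv.self_trans_symm, Equiv.refl_trans]
  · rw [neighbour_of_ne _ _ h₀ hl, neighbour_of_ne _ _ h₀ hl, ← Equiv.trans_assoc,
      Equiv.swap_swap, Equiv.refl_trans]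

lemma neighbour_ne (x : Cell (n + 1) × Fin (n + 2)) : neighbour x ≠ x := by
  obtain ⟨⟨b, σ⟩, k⟩ := x
  by_cases h₀ : k = 0
  · subst h₀
    rw [neighbour_zero]
    exact fun h => Fin.last_pos.ne' (congrArg Prod.snd h)
  by_cases hl : k = Fin.last (n + 1)
  · subst hl
    rw [neighbour_last]
    exact fun h => Fin.last_pos.ne (congrArg Prod.snd h)
  · rw [neighbour_of_ne _ _ h₀ hl]
    exact fun h => swap_trans_ne (val_castPred_eq_val_pred_add_one h₀ hl)
      (congrArg (fun x => x.1.2) h)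

lemma facet_neighbour (x : Cell (n + 1) × Fin (n + 2)) :
    facet (neighbour x).1.1 (neighbour x).1.2 (neighbour x).2 = facet x.1.1 x.1.2 x.2 := by
  obtain ⟨⟨b, σ⟩, k⟩ := x
  by_cases h₀ : k = 0
  · subst h₀
    rw [neighbour_zero]
    exact facet_rotate
  by_cases hl : k = Fin.last (n + 1)
  · subst hl
    rw [neighbour_last]
    exact facet_unrotate
  · rw [neighbour_of_ne _ _ h₀ hl]
    simpa using facet_swap (b := b) (σ := σ) (val_castPred_eq_val_pred_add_one h₀ hl)

lemma IsCell.neighbour (hc : IsSpernerColoring N c) {x : Cell (n + 1) × Fin (n + 2)}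
    (hcell : IsCell N x.1.1 x.1.2) (hdoor : IsDoor c x.1.1 x.1.2 x.2)
    (hbot : ¬ OnBottom x.1.1 x.1.2 x.2) :
    IsCell N (neighbour x).1.1 (neighbour x).1.2 := by
  obtain ⟨⟨b, σ⟩, k⟩ := x
  by_cases h₀ : k = 0
  · subst h₀
    rw [neighbour_zero]
    exact hcell.rotate hbot
  by_cases hl : k = Fin.last (n + 1)
  · subst hl
    rw [neighbour_last]
    exact hcell.unrotate hc hdoor hbot
  · rw [neighbour_of_ne _ _ h₀ hl]
    rw [← Fin.castSucc_castPred k hl] at hdoor hbot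
    exact hcell.swap (val_castPred_eq_val_pred_add_one h₀ hl) hc hdoor hbot

end Neighbour

section Lift

variable {N : ℕ}

lemma sum_snoc_zero (x : Fin (n + 1) → ℤ) :
    ∑ i, (Fin.snoc x 0 : Fin (n + 2) → ℤ) i = ∑ i, x i := by
  simp [Fin.sum_univ_castSucc]

lemma step_castSucc_eq_snoc (m : Fin n) : step m.castSucc = Fin.snoc (step m) 0 := by
  ext i
  induction i using Fin.lastCases with
  | last =>
    rw [step, Fin.snoc_last, Fin.succ_castSucc, if_neg (Fin.castSucc_lt_last _).ne',
      if_neg (Fin.castSucc_lt_last _).ne', sub_zero]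
  | cast i => simp only [step, Fin.snoc_castSucc, Fin.succ_castSucc, Fin.castSucc_inj]

def liftPerm (τ : Equiv.Perm (Fin n)) : Equiv.Perm (Fin (n + 1)) :=
  (Equiv.Perm.decomposeFin.symm (0, τ)).trans (finRotate (n + 1)).symm

def unliftPerm (σ : Equiv.Perm (Fin (n + 1))) : Equiv.Perm (Fin n) :=
  (Equiv.Perm.decomposeFin (σ.trans (finRotate (n + 1)))).2

lemma liftPerm_zero (τ : Equiv.Perm (Fin n)) : liftPerm τ 0 = Fin.last n := by
  rw [liftPerm, Equiv.trans_apply, Equiv.Perm.decomposeFin_symm_apply_zero, Equiv.symm_apply_eq,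
    finRotate_last]

lemma liftPerm_succ (τ : Equiv.Perm (Fin n)) (j : Fin n) :
    liftPerm τ j.succ = (τ j).castSucc := by
  rw [liftPerm, Equiv.trans_apply, Equiv.Perm.decomposeFin_symm_apply_succ, Equiv.swap_self,
    Equiv.refl_apply, Equiv.symm_apply_eq]
  exact Fin.ext (by rw [coe_finRotate_of_ne_last (Fin.castSucc_lt_last _).ne]; simp)

lemma unliftPerm_liftPerm (τ : Equiv.Perm (Fin n)) : unliftPerm (liftPerm τ) = τ := by
  rw [unliftPerm, liftPerm, Equiv.trans_assoc, Equiv.symm_trans_self, Equiv.trans_refl,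
    Equiv.apply_symm_apply]

lemma liftPerm_unliftPerm {σ : Equiv.Perm (Fin (n + 1))} (h : σ 0 = Fin.last n) :
    liftPerm (unliftPerm σ) = σ := by
  have h₀ : (Equiv.Perm.decomposeFin (σ.trans (finRotate (n + 1)))).1 = 0 := by
    have := Equiv.Perm.decomposeFin_symm_apply_zero
      (Equiv.Perm.decomposeFin (σ.trans (finRotate (n + 1)))).1
      (Equiv.Perm.decomposeFin (σ.trans (finRotate (n + 1)))).2
    rwa [Prod.mk.eta, Equiv.symm_apply_apply, Equiv.trans_apply, h, finRotate_last,
      eq_comm] at this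
  rw [liftPerm, unliftPerm, ← h₀, Prod.mk.eta, Equiv.symm_apply_apply, Equiv.trans_assoc,
    Equiv.self_trans_symm, Equiv.trans_refl]

def liftBase (b : Fin (n + 1) → ℤ) : Fin (n + 2) → ℤ := Fin.snoc b 0 - step (Fin.last n)

variable {b : Fin (n + 1) → ℤ} {τ : Equiv.Perm (Fin n)}

lemma vertex_liftBase {m : ℕ} (hm : m ≤ n) :
    vertex (liftBase b) (liftPerm τ) (m + 1) = Fin.snoc (vertex b τ m) 0 := by
  induction m with
  | zero => rw [vertex_one, liftPerm_zero, liftBase, sub_add_cancel, vertex_zero]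
  | succ m ih =>
    ext i
    rw [vertex_succ _ _ (by omega), ih (by omega),
      show (⟨m + 1, by omega⟩ : Fin (n + 1)) = (⟨m, by omega⟩ : Fin n).succ from rfl,
      liftPerm_succ, step_castSucc_eq_snoc]
    induction i using Fin.lastCases with
    | last => simp
    | cast i => simp [vertex_succ b τ (show m < n by omega)]

lemma facet_liftBase :
    facet (liftBase b) (liftPerm τ) 0 =
      univ.image fun j : Fin (n + 1) => Fin.snoc (vertex b τ j) 0 :=
  image_congr fun j _ => by
    rw [Fin.succAbove_zero, Fin.val_succ, vertex_liftBase (Nat.le_of_lt_succ j.is_lt)]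

lemma onBottom_liftBase : OnBottom (liftBase b) (liftPerm τ) 0 := by
  intro x hx
  rw [facet_liftBase] at hx
  obtain ⟨j, -, rfl⟩ := mem_image.1 hx
  exact Fin.snoc_last _ _

lemma IsCell.one_le_base_last (hN : 1 ≤ N) {σ : Equiv.Perm (Fin n)} (hcell : IsCell N b σ) :
    1 ≤ b (Fin.last n) := by
  cases n with
  | zero =>
    have := hcell.1
    rw [Fin.sum_univ_one] at this
    change 1 ≤ b 0
    omega
  | succ n =>
    have := hcell.vertex_nonneg (n + 1) (Fin.last (n + 1))
    rw [vertex_of_le b σ le_rfl, if_neg Fin.last_pos.ne', if_pos rfl] at this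
    omega

lemma IsCell.lift (hN : 1 ≤ N) (hcell : IsCell N b τ) : IsCell N (liftBase b) (liftPerm τ) := by
  refine isCell_of_vertex_nonneg ?_ fun k hk i => ?_
  · simp only [liftBase, Pi.sub_apply, sum_sub_distrib, sum_step, sub_zero, sum_snoc_zero, hcell.1]
  obtain _ | m := k
  · rw [vertex_zero, liftBase, Pi.sub_apply]
    induction i using Fin.lastCases with
    | last => rw [Fin.snoc_last, ← Fin.succ_last, step_succ]; norm_num
    | cast i =>
      rw [Fin.snoc_castSucc]
      by_cases hi : i = Fin.last n
      · rw [hi, step_castSucc]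
        have := hcell.one_le_base_last hN
        omega
      · rw [step_eq_zero (by rwa [Ne, Fin.castSucc_inj]) (by
          rw [Fin.succ_last]; exact (Fin.castSucc_lt_last i).ne)]
        simpa using hcell.base_nonneg i
  · rw [vertex_liftBase (by omega)]
    induction i using Fin.lastCases with
    | last => simp
    | cast i => simpa using hcell.vertex_nonneg m i

lemma init_vertex_liftBase_one : Fin.init (vertex (liftBase b) (liftPerm τ) 1) = b := by
  rw [vertex_liftBase n.zero_le, vertex_zero, Fin.init_snoc]

/-- On lattice points the colour `Fin.last (n + 1)` never occurs (`castSucc_lowerColoring`), so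
the junk value `0` is never used. -/
noncomputable def lowerColoring (c : (Fin (n + 2) → ℤ) → Fin (n + 2)) (x : Fin (n + 1) → ℤ) :
    Fin (n + 1) :=
  if h : c (Fin.snoc x 0) = Fin.last (n + 1) then 0 else (c (Fin.snoc x 0)).castPred h

variable {c : (Fin (n + 2) → ℤ) → Fin (n + 2)}

lemma castSucc_lowerColoring (hc : IsSpernerColoring N c) {x : Fin (n + 1) → ℤ}
    (hx : ∀ i, 0 ≤ x i) (hsum : ∑ i, x i = N) :
    (lowerColoring c x).castSucc = c (Fin.snoc x 0) ∧ 0 < x (lowerColoring c x) := by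
  have hpos := hc (Fin.snoc x 0) (fun i => by induction i using Fin.lastCases <;> simp [hx])
    (by rw [sum_snoc_zero, hsum])
  have hne : c (Fin.snoc x 0) ≠ Fin.last (n + 1) := fun h => by simp [h] at hpos
  rw [lowerColoring, dif_neg hne, Fin.castSucc_castPred]
  refine ⟨rfl, ?_⟩
  rwa [← Fin.castSucc_castPred _ hne, Fin.snoc_castSucc] at hpos

lemma IsSpernerColoring.lower (hc : IsSpernerColoring N c) :
    IsSpernerColoring N (lowerColoring c) :=
  fun _ hx hsum => (castSucc_lowerColoring hc hx hsum).2

lemma isDoor_lift_iff (hc : IsSpernerColoring N c) (hcell : IsCell N b τ) :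
    IsDoor c (liftBase b) (liftPerm τ) 0 ↔ IsRainbow (lowerColoring c) b τ := by
  have hcolor : ∀ j : Fin (n + 1), c (Fin.snoc (vertex b τ j) 0) =
      (lowerColoring c (vertex b τ j)).castSucc := fun j =>
    (castSucc_lowerColoring hc (hcell.vertex_nonneg j) (hcell.sum_vertex j)).1.symm
  rw [IsDoor, facet_liftBase, image_image, ← compl_singleton, ← Fin.image_castSucc]
  simp only [Function.comp_def, hcolor]
  change image (Fin.castSucc ∘ fun j : Fin (n + 1) => lowerColoring c (vertex b τ j)) univ = _ ↔ _
  rw [← image_image, image_inj (Fin.castSucc_injective _), IsRainbow]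
  simp [eq_univ_iff_forall, Function.Surjective]

end Lift

section Unlift

variable {b : Fin (n + 2) → ℤ} {σ : Equiv.Perm (Fin (n + 1))} {N : ℕ}

lemma OnBottom.eq_zero (hN : 1 ≤ N) (hcell : IsCell N b σ) {k : Fin (n + 2)}
    (hbot : OnBottom b σ k) : k = 0 := by
  by_contra hk
  have := hbot _ (vertex_mem_facet (Ne.symm hk))
  rw [Fin.val_zero, vertex_zero] at this
  have := hcell.one_le_base_last hN
  omega

lemma OnBottom.zero_perm_and_base (hN : 1 ≤ N) (hcell : IsCell N b σ) (hbot : OnBottom b σ 0) :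
    σ 0 = Fin.last n ∧ b (Fin.last (n + 1)) = 1 := by
  have h₁ := hbot _ (vertex_mem_facet (m := 1) Fin.zero_lt_one.ne')
  rw [Fin.val_one, vertex_one, Pi.add_apply] at h₁
  have := hcell.one_le_base_last hN
  have := neg_one_le_step (σ 0) (Fin.last (n + 1))
  have hstep : step (σ 0) (Fin.last (n + 1)) = -1 := by omega
  rw [step_eq_neg_one_iff, ← Fin.succ_last, Fin.succ_inj] at hstep
  exact ⟨hstep.symm, by omega⟩

lemma liftBase_init_vertex_one (hσ : σ 0 = Fin.last n) (hb : b (Fin.last (n + 1)) = 1) :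
    liftBase (Fin.init (vertex b σ 1)) = b := by
  have hlast : vertex b σ 1 (Fin.last (n + 1)) = 0 := by
    rw [vertex_one, Pi.add_apply, hσ, ← Fin.succ_last, step_succ, Fin.succ_last, hb]
    norm_num
  rw [liftBase, ← hlast, Fin.snoc_init_self, vertex_one, hσ, add_sub_cancel_right]

lemma IsCell.unlift (hcell : IsCell N b σ) (hσ : σ 0 = Fin.last n)
    (hb : b (Fin.last (n + 1)) = 1) : IsCell N (Fin.init (vertex b σ 1)) (unliftPerm σ) := by
  have hvertex := fun m (hm : m ≤ n) => vertex_liftBase (b := Fin.init (vertex b σ 1))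
    (τ := unliftPerm σ) hm
  simp only [liftBase_init_vertex_one hσ hb, liftPerm_unliftPerm hσ] at hvertex
  refine isCell_of_vertex_nonneg ?_ fun m hm i => ?_
  · rw [← sum_snoc_zero, ← vertex_zero (Fin.init (vertex b σ 1)) (unliftPerm σ),
      ← hvertex 0 n.zero_le]
    exact hcell.sum_vertex 1
  · have h := congrFun (hvertex m hm) i.castSucc
    rw [Fin.snoc_castSucc] at h
    exact h ▸ hcell.vertex_nonneg (m + 1) i.castSucc

end Unlift

section Count

open Classical

variable {N : ℕ}

noncomputable def doors (N : ℕ) (c : (Fin (n + 1) → ℤ) → Fin (n + 1)) :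
    Finset (Cell n × Fin (n + 1)) :=
  (cells n N ×ˢ univ).filter fun x => IsDoor c x.1.1 x.1.2 x.2

lemma card_doors (c : (Fin (n + 1) → ℤ) → Fin (n + 1)) :
    ((doors N c).card : ZMod 2) = ((cells n N).filter fun p => IsRainbow c p.1 p.2).card := by
  rw [doors, natCast_card_filter, sum_product, natCast_card_filter]
  refine sum_congr rfl fun p _ => ?_
  rw [← natCast_card_filter]
  exact card_filter_isDoor (c := c) (b := p.1) (σ := p.2)

variable {c : (Fin (n + 2) → ℤ) → Fin (n + 2)}

lemma card_filter_doors_not_onBottom (hc : IsSpernerColoring N c) :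
    (((doors N c).filter fun x => ¬ OnBottom x.1.1 x.1.2 x.2).card : ZMod 2) = 0 := by
  have hmem : ∀ x ∈ (doors N c).filter (fun x => ¬ OnBottom x.1.1 x.1.2 x.2),
      neighbour x ∈ (doors N c).filter fun x => ¬ OnBottom x.1.1 x.1.2 x.2 := by
    intro x hx
    simp only [doors, mem_filter, mem_product, mem_univ, and_true, mem_cells] at hx ⊢
    refine ⟨⟨hx.1.1.neighbour hc hx.1.2 hx.2, ?_⟩, ?_⟩
    · rw [IsDoor, facet_neighbour]
      exact hx.1.2
    · rw [OnBottom, facet_neighbour]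
      exact hx.2
  rw [card_eq_sum_ones, Nat.cast_sum, Nat.cast_one]
  exact sum_involution (fun x _ => neighbour x) (fun _ _ => rfl) (fun x _ _ => neighbour_ne x)
    hmem fun x _ => neighbour_neighbour x

lemma card_filter_doors_onBottom (hN : 1 ≤ N) (hc : IsSpernerColoring N c) :
    ((doors N c).filter fun x => OnBottom x.1.1 x.1.2 x.2).card =
      ((cells n N).filter fun p => IsRainbow (lowerColoring c) p.1 p.2).card := by
  refine card_nbij' (fun x => (Fin.init (vertex x.1.1 x.1.2 1), unliftPerm x.1.2))
    (fun p => ((liftBase p.1, liftPerm p.2), 0)) ?_ ?_ ?_ ?_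
  · rintro ⟨⟨b, σ⟩, k⟩ hx
    simp only [doors, mem_coe, mem_filter, mem_product, mem_univ, and_true, mem_cells] at hx ⊢
    obtain rfl := hx.2.eq_zero hN hx.1.1
    obtain ⟨hσ, hb⟩ := hx.2.zero_perm_and_base hN hx.1.1
    have hlower := hx.1.1.unlift hσ hb
    refine ⟨hlower, (isDoor_lift_iff hc hlower).1 ?_⟩
    rw [liftBase_init_vertex_one hσ hb, liftPerm_unliftPerm hσ]
    exact hx.1.2
  · rintro ⟨b, τ⟩ hp
    simp only [doors, mem_coe, mem_filter, mem_product, mem_univ, and_true, mem_cells] at hp ⊢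
    exact ⟨⟨hp.1.lift hN, (isDoor_lift_iff hc hp.1).2 hp.2⟩, onBottom_liftBase⟩
  · rintro ⟨⟨b, σ⟩, k⟩ hx
    simp only [doors, mem_coe, mem_filter, mem_product, mem_univ, and_true, mem_cells] at hx
    obtain rfl := hx.2.eq_zero hN hx.1.1
    obtain ⟨hσ, hb⟩ := hx.2.zero_perm_and_base hN hx.1.1
    simp only [liftBase_init_vertex_one hσ hb, liftPerm_unliftPerm hσ]
  · rintro ⟨b, τ⟩ -
    simp only [init_vertex_liftBase_one, unliftPerm_liftPerm]

/-- Sperner's lemma. -/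
theorem card_filter_isRainbow_cells (hN : 1 ≤ N) {c : (Fin (n + 1) → ℤ) → Fin (n + 1)}
    (hc : IsSpernerColoring N c) :
    (((cells n N).filter fun p : Cell n => IsRainbow c p.1 p.2).card : ZMod 2) = 1 := by
  induction n with
  | zero =>
    have hcells : cells 0 N = {(fun _ => (N : ℤ), 1)} := by
      ext ⟨b, σ⟩
      rw [mem_cells, mem_singleton, Prod.mk.injEq]
      refine ⟨fun h => ⟨funext fun i => ?_, Subsingleton.elim (α := Equiv.Perm (Fin 0)) _ _⟩, ?_⟩
      · rw [Subsingleton.elim (α := Fin 1) i 0, ← h.1, Fin.sum_univ_one]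
      · rintro ⟨rfl, rfl⟩
        refine isCell_of_vertex_nonneg (by simp) fun k hk i => ?_
        obtain rfl : k = 0 := by omega
        simp [vertex_zero]
    have hrainbow : IsRainbow c (fun _ => (N : ℤ)) 1 := fun i =>
      ⟨0, Subsingleton.elim (α := Fin 1) _ _⟩
    rw [hcells, filter_singleton, if_pos hrainbow, card_singleton, Nat.cast_one]
  | succ n ih =>
    rw [← card_doors, ← card_filter_add_card_filter_not fun x : Cell (n + 1) × Fin (n + 2) =>
      OnBottom x.1.1 x.1.2 x.2, Nat.cast_add, card_filter_doors_not_onBottom hc, add_zero,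
      card_filter_doors_onBottom hN hc, ih hc.lower]

end Count

theorem exists_isRainbow {N : ℕ} (hN : 1 ≤ N) {c : (Fin (n + 1) → ℤ) → Fin (n + 1)}
    (hc : IsSpernerColoring N c) : ∃ b σ, IsCell N b σ ∧ IsRainbow c b σ := by
  classical
  have hodd := card_filter_isRainbow_cells hN hc
  obtain ⟨⟨b, σ⟩, hp⟩ : ((cells n N).filter fun p : Cell n => IsRainbow c p.1 p.2).Nonempty :=
    nonempty_iff_ne_empty.2 fun h => by simp [h] at hodd
  rw [mem_filter, mem_cells] at hp
  exact ⟨b, σ, hp⟩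

end Sperner

open Filter Topology

theorem IsCompact.exists_forall_mem_of_forall_exists_dist_lt {X ι : Type*} [PseudoMetricSpace X]
    {K : Set X} (hK : IsCompact K) {F : ι → Set X} (hF : ∀ i, IsClosed (F i))
    (h : ∀ ε > 0, ∃ t ∈ K, ∀ i, ∃ p ∈ F i, dist p t < ε) :
    ∃ t ∈ K, ∀ i, t ∈ F i := by
  choose t htK p hpF hpt using fun m : ℕ => h (1 / (m + 1)) Nat.one_div_pos_of_nat
  obtain ⟨t₀, ht₀K, φ, hφ, hlim⟩ := hK.tendsto_subseq htK
  refine ⟨t₀, ht₀K, fun i => (hF i).mem_of_tendsto (hlim.congr_dist ?_)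
    (Eventually.of_forall fun m => hpF (φ m) i)⟩
  refine squeeze_zero (fun _ => dist_nonneg) (fun m => (dist_comm _ _).trans_le (hpt (φ m) i).le) ?_
  exact tendsto_one_div_add_atTop_nhds_zero_nat.comp hφ.tendsto_atTop

lemma div_mem_stdSimplex {ι : Type*} [Fintype ι] {N : ℕ} (hN : 0 < N) {x : ι → ℤ}
    (hx : ∀ i, 0 ≤ x i) (hsum : ∑ i, x i = N) : (fun i => (x i : ℝ) / N) ∈ stdSimplex ℝ ι := by
  refine ⟨fun i => div_nonneg (Int.cast_nonneg (hx i)) N.cast_nonneg, ?_⟩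
  rw [← Finset.sum_div, ← Int.cast_sum, hsum, Int.cast_natCast, div_self (by positivity)]

open Sperner in
lemma exists_mem_stdSimplex_forall_exists_dist_le {n N : ℕ} (hN : 1 ≤ N)
    {F : Fin (n + 1) → Set (Fin (n + 1) → ℝ)}
    (hcover : ∀ t ∈ stdSimplex ℝ (Fin (n + 1)), ∃ i, 0 < t i ∧ t ∈ F i) :
    ∃ t ∈ stdSimplex ℝ (Fin (n + 1)), ∀ i, ∃ p ∈ F i, dist p t ≤ 1 / N := by
  classical
  set point : (Fin (n + 1) → ℤ) → Fin (n + 1) → ℝ := fun x i => (x i : ℝ) / N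
  have hcolor : ∀ x : Fin (n + 1) → ℤ, (∀ i, 0 ≤ x i) → ∑ i, x i = N →
      ∃ i, 0 < x i ∧ point x ∈ F i := fun x hx hsum =>
    (hcover _ (div_mem_stdSimplex hN hx hsum)).imp fun i hi =>
      ⟨by simpa [point, div_pos_iff_of_pos_right (show (0 : ℝ) < N by positivity)] using hi.1, hi.2⟩
  obtain ⟨b, σ, hcell, hrainbow⟩ := exists_isRainbow hN (c := fun x =>
    if h : ∃ i, 0 < x i ∧ point x ∈ F i then h.choose else 0) fun x hx hsum => by
      simp only [dif_pos (hcolor x hx hsum)]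
      exact (hcolor x hx hsum).choose_spec.1
  refine ⟨point b, div_mem_stdSimplex hN hcell.base_nonneg hcell.1, fun i => ?_⟩
  obtain ⟨k, hk⟩ := hrainbow i
  have hv := hcolor _ (hcell.vertex_nonneg k) (hcell.sum_vertex k)
  simp only [dif_pos hv] at hk
  refine ⟨point (vertex b σ k), hk ▸ hv.choose_spec.2,
    (dist_pi_le_iff (by positivity)).2 fun j => ?_⟩
  rw [Real.dist_eq, ← sub_div, abs_div, Nat.abs_cast, ← Int.cast_sub, ← Int.cast_abs]
  gcongr
  exact_mod_cast abs_vertex_sub_le b σ k j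

/-- The Knaster–Kuratowski–Mazurkiewicz lemma. -/
theorem exists_mem_stdSimplex_forall_mem {n : ℕ} {F : Fin (n + 1) → Set (Fin (n + 1) → ℝ)}
    (hF : ∀ i, IsClosed (F i))
    (hcover : ∀ t ∈ stdSimplex ℝ (Fin (n + 1)), ∃ i, 0 < t i ∧ t ∈ F i) :
    ∃ t ∈ stdSimplex ℝ (Fin (n + 1)), ∀ i, t ∈ F i := by
  refine (isCompact_stdSimplex ℝ _).exists_forall_mem_of_forall_exists_dist_lt hF fun ε hε => ?_
  obtain ⟨N, hN⟩ := exists_nat_one_div_lt hε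
  obtain ⟨t, ht, hp⟩ := exists_mem_stdSimplex_forall_exists_dist_le (N := N + 1) (by omega) hcover
  exact ⟨t, ht, fun i => (hp i).imp fun p hp => ⟨hp.1, hp.2.trans_lt (by exact_mod_cast hN)⟩⟩

lemma exists_pos_le_of_mem_stdSimplex {ι : Type*} [Fintype ι] {t u y : ι → ℝ}
    (ht : t ∈ stdSimplex ℝ ι) (hu : u ∈ stdSimplex ℝ ι) (hy : y ∈ stdSimplex ℝ ι)
    (hsupp : ∀ i, t i = 0 → u i = 0) : ∃ i, 0 < t i ∧ y i ≤ u i := by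
  by_contra! h
  have hle : ∀ i ∈ univ, u i ≤ y i := fun i _ =>
    (ht.1 i).eq_or_lt.elim (fun h0 => hsupp i h0.symm ▸ hy.1 i) fun hpos => (h i hpos).le
  obtain ⟨i, -, hi⟩ := exists_lt_of_sum_lt (s := univ) (f := 0) (g := t) (by simp [ht.2])
  have := sum_lt_sum hle ⟨i, mem_univ i, h i hi⟩
  rw [hu.2, hy.2] at this
  exact lt_irrefl _ this

/-- A continuous self-map of the standard simplex preserving every closed face is surjective. -/
theorem simplex_selfmap_surjective {n : ℕ}
    (f : (Fin (n + 1) → ℝ) → (Fin (n + 1) → ℝ))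
    (hc : ContinuousOn f (stdSimplex ℝ (Fin (n + 1))))
    (hmap : Set.MapsTo f (stdSimplex ℝ (Fin (n + 1))) (stdSimplex ℝ (Fin (n + 1))))
    (hface : ∀ t ∈ stdSimplex ℝ (Fin (n + 1)), ∀ i, t i = 0 → f t i = 0) :
    stdSimplex ℝ (Fin (n + 1)) ⊆ f '' stdSimplex ℝ (Fin (n + 1)) := by
  intro y hy
  obtain ⟨t, ht, hle⟩ := exists_mem_stdSimplex_forall_mem
    (F := fun i => stdSimplex ℝ (Fin (n + 1)) ∩ f ⁻¹' {u | y i ≤ u i})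
    (fun i => hc.preimage_isClosed_of_isClosed (isClosed_stdSimplex ℝ _)
      (isClosed_le continuous_const (continuous_apply i)))
    fun t ht => (exists_pos_le_of_mem_stdSimplex ht (hmap ht) hy (hface t ht)).imp
      fun i hi => ⟨hi.1, ht, hi.2⟩
  have hsum : ∑ i, y i = ∑ i, f t i := hy.2.trans (hmap ht).2.symm
  exact ⟨t, ht, funext fun i =>
    ((sum_eq_sum_iff_of_le fun i _ => (hle i).2).1 hsum i (mem_univ i)).symm⟩
end
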